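/- Let s and n be positive integers such that p := n+1 is prime. Then for every j ∈ {0,1,...,p−1}: M_{s,n,p}(j) = p^{s−1}·φ(p) = p^{s−1}(p−1) if j = 0, and M_{s,n,p}(j) = −p^{s−1} if j ≠ 0, where φ is Euler's totient function. -/

import Mathlib

/-- `T s n` is the polynomial `∏_{j=1}^{n} (1 - q^j)^s`. -/
noncomputable def T (s n : ℕ) : Polynomial ℤ :=
  ∏ j ∈ Finset.Icc 1 n, (1 - Polynomial.X ^ j) ^ s

/-- `Nsn s n = s·n(n+1)/2`, the degree of `T s n`. -/
def Nsn (s n : ℕ) : ℕ := s * n * (n + 1) / 2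

/-- `M s n N j = Σ_{0 ≤ i ≤ N_{s,n}, i ≡ j (mod N)} t_{i,s,n}`. -/
noncomputable def M (s n N j : ℕ) : ℤ :=
  ∑ i ∈ (Finset.range (Nsn s n + 1)).filter (fun i => i % N = j), (T s n).coeff i

/-!
Modulo `X ^ p - 1`, the product `∏_{j=1}^{p-1} (1 - X ^ j)` is congruent to
`p - (1 + X + ⋯ + X ^ (p - 1))`: both sides vanish at `1`, and at a primitive `p`-th root of
unity `ζ` the product is `p` while the geometric sum is `0`. Folding exponents modulo `p` maps
`ℤ[X]` onto the group ring `ℤ[ℤ/p]`, where the coefficient at `j` of the image of `T s n` is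
`M s n p j`. There `e = ∑_g g` satisfies `e ^ 2 = p e`, so `(p - e) ^ s = p ^ s - p ^ (s-1) e`.
-/

open Polynomial Finset

theorem prod_Icc_one_sub_pow_of_pow_eq_one {R : Type*} [CommRing R] [IsDomain R] {n : ℕ}
    (hp : (n + 1).Prime) {μ : R} (hμ : μ ^ (n + 1) = 1) :
    ∏ k ∈ Icc 1 n, (1 - μ ^ k) = n + 1 - ∑ i ∈ range (n + 1), μ ^ i := by
  have hn : 1 ≤ n := by have := hp.two_le; omega
  by_cases h1 : μ = 1
  · subst h1
    rw [prod_eq_zero (i := 1) (by simpa) (by simp)]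
    simp
  · have hprim := isPrimitiveRoot_of_mem_nthRootsFinset hp
      ((mem_nthRootsFinset n.succ_pos _).2 hμ) h1
    rw [hprim.geom_sum_eq_zero (by omega), sub_zero, ← hprim.prod_one_sub_pow_eq_order,
      ← Ico_add_one_right_eq_Icc, prod_Ico_eq_prod_range, Nat.add_sub_cancel]
    simp_rw [add_comm 1]

theorem X_pow_sub_one_dvd_prod_one_sub_X_pow {n : ℕ} (hp : (n + 1).Prime) :
    (X ^ (n + 1) - 1 : ℤ[X]) ∣
      ∏ k ∈ Icc 1 n, (1 - X ^ k) - ((n : ℤ[X]) + 1 - ∑ i ∈ range (n + 1), X ^ i) := by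
  have hmonic : (X ^ (n + 1) - 1 : ℤ[X]).Monic := by
    simpa using monic_X_pow_sub_C (1 : ℤ) n.succ_ne_zero
  rw [← map_dvd_map (Int.castRingHom ℂ) Int.cast_injective hmonic]
  simp only [Polynomial.map_sub, Polynomial.map_pow, map_X, Polynomial.map_one]
  rw [X_pow_sub_one_eq_prod n.succ_pos (Complex.isPrimitiveRoot_exp _ n.succ_ne_zero)]
  refine prod_dvd_of_coprime
    ((pairwise_coprime_X_sub_C Function.injective_id).set_pairwise _) fun μ hμ => ?_
  rw [dvd_iff_isRoot, IsRoot, eval_sub, sub_eq_zero]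
  simpa [Polynomial.map_prod, Polynomial.map_sum, eval_prod, eval_finsetSum] using
    prod_Icc_one_sub_pow_of_pow_eq_one hp ((mem_nthRootsFinset n.succ_pos _).1 hμ)

section FoldMod

variable {R : Type*} [CommSemiring R]

noncomputable def foldMod (p : ℕ) : R[X] →+* AddMonoidAlgebra R (ZMod p) :=
  (AddMonoidAlgebra.mapDomainRingHom R (Nat.castAddMonoidHom (ZMod p))).comp
    (toFinsuppIso R).toRingHom

theorem coeff_foldMod (p : ℕ) (P : R[X]) (a : ZMod p) :
    (foldMod p P).coeff a = ∑ i ∈ P.support with ((i : ℕ) : ZMod p) = a, P.coeff i := by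
  rw [sum_filter]
  simp only [foldMod, RingHom.coe_comp, Function.comp_apply,
    AddMonoidAlgebra.mapDomainRingHom_apply, RingEquiv.toRingHom_eq_coe, RingEquiv.coe_toRingHom,
    toFinsuppIso_apply, AddMonoidAlgebra.coeff_mapDomain, Finsupp.mapDomain, Finsupp.sum_apply,
    Finsupp.single_apply]
  rfl

theorem foldMod_X_pow (p k : ℕ) :
    foldMod p (X ^ k : R[X]) = AddMonoidAlgebra.single (k : ZMod p) 1 := by
  simp [foldMod]

theorem foldMod_X_pow_sub_one {R : Type*} [CommRing R] (p : ℕ) :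
    foldMod p (X ^ p - 1 : R[X]) = 0 := by
  rw [map_sub, foldMod_X_pow, ZMod.natCast_self, map_one, ← AddMonoidAlgebra.one_def, sub_self]

end FoldMod

section AllOnes

variable (R G : Type*) [Semiring R] [Fintype G]

noncomputable def allOnes : AddMonoidAlgebra R G :=
  ∑ g : G, AddMonoidAlgebra.single g 1

variable {R G}

theorem coeff_allOnes (g : G) : (allOnes R G).coeff g = 1 := by
  classical
  simp [allOnes, AddMonoidAlgebra.coeff_sum, AddMonoidAlgebra.coeff_single, Finsupp.single_apply]

variable [AddGroup G]

theorem single_mul_allOnes (g : G) (r : R) :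
    AddMonoidAlgebra.single g r * allOnes R G = r • allOnes R G := by
  rw [allOnes, mul_sum, smul_sum]
  refine Fintype.sum_equiv (Equiv.addLeft g) _ _ fun h => ?_
  simp [AddMonoidAlgebra.single_mul_single]

theorem allOnes_mul_allOnes :
    allOnes R G * allOnes R G = (Fintype.card G : AddMonoidAlgebra R G) * allOnes R G := by
  nth_rw 1 [allOnes]
  rw [sum_mul]
  simp_rw [single_mul_allOnes, one_smul, sum_const, card_univ, nsmul_eq_mul]

end AllOnes

theorem foldMod_geom_sum {R : Type*} [CommSemiring R] (p : ℕ) [NeZero p] :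
    foldMod p (∑ i ∈ range p, X ^ i : R[X]) = allOnes R (ZMod p) := by
  simp_rw [map_sum, foldMod_X_pow, allOnes]
  exact sum_nbij' (fun i => (i : ZMod p)) ZMod.val (by simp) (by simp [ZMod.val_lt])
    (fun i hi => ZMod.val_cast_of_lt (mem_range.1 hi)) (fun a _ => ZMod.natCast_zmod_val a)
    fun _ _ => rfl

theorem sub_pow_succ_of_mul_self_eq {R : Type*} [CommRing R] {c e : R} (h : e * e = c * e)
    (k : ℕ) : (c - e) ^ (k + 1) = c ^ (k + 1) - c ^ k * e := by
  induction k with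
  | zero => simp
  | succ k ih => rw [pow_succ, ih]; linear_combination c ^ k * h

theorem natDegree_T_le (s n : ℕ) : (T s n).natDegree ≤ Nsn s n := by
  have hgauss : (∑ j ∈ Icc 1 n, j) * 2 = n * (n + 1) := by
    induction n with
    | zero => rfl
    | succ n ih => rw [sum_Icc_succ_top (by omega), add_mul, ih]; ring
  have hfactor (j : ℕ) : ((1 - X ^ j : ℤ[X]) ^ s).natDegree ≤ s * j :=
    natDegree_pow_le_of_le s <|
      (natDegree_sub_le_of_le natDegree_one.le (natDegree_X_pow_le j)).trans (by simp)
  calc (T s n).natDegree ≤ ∑ j ∈ Icc 1 n, ((1 - X ^ j : ℤ[X]) ^ s).natDegree :=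
        natDegree_prod_le _ _
    _ ≤ ∑ j ∈ Icc 1 n, s * j := sum_le_sum fun j _ => hfactor j
    _ = Nsn s n := by
      rw [← mul_sum, Nsn, mul_assoc, ← hgauss, ← mul_assoc, Nat.mul_div_cancel _ two_pos]

theorem M_eq_coeff_foldMod (s n : ℕ) {N j : ℕ} (hj : j < N) :
    M s n N j = (foldMod N (T s n)).coeff j := by
  have hsupp : (T s n).support ⊆ range (Nsn s n + 1) := fun i hi =>
    mem_range_succ_iff.2 ((le_natDegree_of_mem_supp i hi).trans (natDegree_T_le s n))
  rw [coeff_foldMod, M, sum_filter, sum_filter,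
    sum_subset hsupp fun i _ hi => by rw [notMem_support_iff.1 hi, ite_self]]
  refine sum_congr rfl fun i _ => if_congr ?_ rfl rfl
  rw [ZMod.natCast_eq_natCast_iff', Nat.mod_eq_of_lt hj]

theorem T_eq_T_one_pow (s n : ℕ) : T s n = T 1 n ^ s := by
  simp only [T, pow_one, prod_pow]

theorem foldMod_T_one {n : ℕ} (hp : (n + 1).Prime) :
    foldMod (n + 1) (T 1 n) =
      ((n + 1 : ℕ) : AddMonoidAlgebra ℤ (ZMod (n + 1))) - allOnes ℤ _ := by
  obtain ⟨Q, hQ⟩ := X_pow_sub_one_dvd_prod_one_sub_X_pow hp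
  have hT : T 1 n =
      ((n : ℤ[X]) + 1 - ∑ i ∈ range (n + 1), X ^ i) + (X ^ (n + 1) - 1) * Q := by
    simp only [T, pow_one]
    linear_combination hQ
  rw [hT, map_add, map_mul, foldMod_X_pow_sub_one, zero_mul, add_zero, map_sub, foldMod_geom_sum]
  simp

theorem foldMod_T {n : ℕ} (hp : (n + 1).Prime) (k : ℕ) :
    foldMod (n + 1) (T (k + 1) n) =
      ((n + 1 : ℕ) : AddMonoidAlgebra ℤ (ZMod (n + 1))) ^ (k + 1) -
        ((n + 1 : ℕ) : AddMonoidAlgebra ℤ (ZMod (n + 1))) ^ k * allOnes ℤ _ := by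
  rw [T_eq_T_one_pow, map_pow, foldMod_T_one hp]
  refine sub_pow_succ_of_mul_self_eq ?_ k
  rw [allOnes_mul_allOnes, ZMod.card]

theorem stmt7_general (s n : ℕ) (hs : 0 < s) (hp : Nat.Prime (n + 1))
    (j : ℕ) (hj : j < n + 1) :
    M s n (n + 1) j =
      if j = 0 then ((n + 1 : ℤ)) ^ (s - 1) * (Nat.totient (n + 1) : ℤ)
      else -((n + 1 : ℤ)) ^ (s - 1) := by
  obtain ⟨k, rfl⟩ : ∃ k, s = k + 1 := ⟨s - 1, by omega⟩
  have hj0 : (j : ZMod (n + 1)) = 0 ↔ j = 0 := by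
    rw [ZMod.natCast_eq_zero_iff]
    exact ⟨fun h => Nat.eq_zero_of_dvd_of_lt h hj, fun h => h ▸ dvd_zero _⟩
  rw [M_eq_coeff_foldMod _ _ hj, foldMod_T hp, AddMonoidAlgebra.coeff_sub, Finsupp.sub_apply,
    ← Nat.cast_pow, ← Nat.cast_pow, ← nsmul_eq_mul, AddMonoidAlgebra.coeff_natCast,
    AddMonoidAlgebra.coeff_smul_apply, coeff_allOnes, Finsupp.single_apply, Nat.totient_prime hp]
  simp only [eq_comm (a := (0 : ZMod (n + 1))), hj0]
  split_ifs <;> push_cast <;> ring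

/-- Theorem (main1 for `p = n+1` prime): `M_{s,n,p}(j) = p^{s-1}(p-1)` if `j = 0`,
and `M_{s,n,p}(j) = -p^{s-1}` otherwise. -/
theorem stmt7 (s n : ℕ) (hs : 0 < s) (hn : 0 < n) (hp : Nat.Prime (n + 1))
    (j : ℕ) (hj : j < n + 1) :
    M s n (n + 1) j =
      if j = 0 then ((n + 1 : ℤ)) ^ (s - 1) * (Nat.totient (n + 1) : ℤ)
      else -((n + 1 : ℤ)) ^ (s - 1) :=
  stmt7_general s n hs hp j hj
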